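/- arXiv:1008.3658 — 3 statements merged into one kernel-verified Lean document; each statement's English description precedes it below -/
import Mathlib

section
/- With H a typical double-well potential, γ_ε as above, and 0 < α < 1, let J̄_ε := ℝ \ ((−1 − ε^α, −1 + ε^α) ∪ (1 − ε^α, 1 + ε^α)). Then sup_{x ∈ J̄_ε} γ_ε(x) → 0 as ε → 0⁺. -/
open MeasureTheory Real Filter Set

lemma tendsto_aux_gamma {a c : ℝ} (ha : 0 < a) (hc : c < 0) :
    Tendsto (fun ε : ℝ => Real.exp (-a * ε ^ c) / ε ^ 2) (nhdsWithin 0 (Set.Ioi 0)) (nhds 0) := by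
  have hb : (0:ℝ) < -c := neg_pos.2 hc
  have hG : Tendsto (fun s : ℝ => s ^ (2 / (-c)) * Real.exp (-a * s)) atTop (nhds 0) :=
    tendsto_rpow_mul_exp_neg_mul_atTop_nhds_zero _ a ha
  have hT : Tendsto (fun t : ℝ => t ^ (-c)) atTop atTop := tendsto_rpow_atTop hb
  have hI : Tendsto (fun ε : ℝ => ε⁻¹) (nhdsWithin (0:ℝ) (Set.Ioi 0)) atTop :=
    tendsto_inv_nhdsGT_zero
  refine ((hG.comp hT).comp hI).congr' ?_
  filter_upwards [self_mem_nhdsWithin] with ε (hε : (0:ℝ) < ε)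
  have hεinv : (0:ℝ) < ε⁻¹ := inv_pos.2 hε
  show ((ε⁻¹ ^ (-c)) ^ (2 / (-c))) * Real.exp (-a * ε⁻¹ ^ (-c)) = _
  have h1 : ε⁻¹ ^ (-c) = ε ^ c := by
    rw [Real.inv_rpow hε.le, ← Real.rpow_neg hε.le, neg_neg]
  have h2 : (ε⁻¹ ^ (-c)) ^ (2 / (-c)) = (ε ^ 2)⁻¹ := by
    rw [← Real.rpow_mul hεinv.le, mul_div_cancel₀ _ hb.ne']
    rw [show ((2:ℝ)) = ((2:ℕ):ℝ) by norm_num, Real.rpow_natCast, inv_pow]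
  rw [h1] at h2
  rw [h1, h2, div_eq_mul_inv, mul_comm]

theorem gamma_eps_sup_outside_wells
    (H : ℝ → ℝ)
    (hsmooth : ContDiff ℝ (⊤ : ℕ∞) H)
    (hnonneg : ∀ x, 0 ≤ H x)
    (heven : ∀ x, H (-x) = H x)
    (hin : ∀ x, 0 < |x| → |x| < 1 → x * deriv H x < 0)
    (hout : ∀ x, 1 < |x| → 0 < x * deriv H x)
    (h1 : H 1 = 0) (hm1 : H (-1) = 0)
    (hd1 : deriv H 1 = 0) (hdm1 : deriv H (-1) = 0) (hd0 : deriv H 0 = 0)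
    (h0 : H 0 = 1) (h2 : H 2 = 1) (hm2 : H (-2) = 1)
    (hdd0 : deriv (deriv H) 0 < 0) (hdd1 : 0 < deriv (deriv H) 1)
    (α : ℝ) (hα0 : 0 < α) (hα1 : α < 1)
    (Z : ℝ → ℝ) (hZ : ∀ ε : ℝ, Z ε = ∫ y : ℝ, Real.exp (-H y / ε ^ 2))
    (γ : ℝ → ℝ → ℝ) (hγ : ∀ ε x, γ ε x = Real.exp (-H x / ε ^ 2) / Z ε) :
    Tendsto (fun ε : ℝ =>
        sSup (γ ε '' (Set.Ioo (-1 - ε ^ α) (-1 + ε ^ α) ∪ Set.Ioo (1 - ε ^ α) (1 + ε ^ α))ᶜ))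
      (nhdsWithin 0 (Set.Ioi 0)) (nhds 0) := by
  -- regularity
  have hsm : ContDiff ℝ (⊤ : ℕ∞) H := hsmooth.of_le (by simp)
  have Hdiff : Differentiable ℝ H := hsm.differentiable (by norm_num)
  have Hcont : Continuous H := Hdiff.continuous
  have hs1 : ContDiff ℝ (⊤ : ℕ∞) (deriv H) := (contDiff_infty_iff_deriv.mp hsm).2
  have H'diff : Differentiable ℝ (deriv H) := hs1.differentiable (by norm_num)
  have H'cont : Continuous (deriv H) := H'diff.continuous
  have H''cont : Continuous (deriv (deriv H)) :=
    ((contDiff_infty_iff_deriv.mp hs1).2).continuous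
  -- monotonicity
  have anti : StrictAntiOn H (Set.Icc 0 1) := by
    apply strictAntiOn_of_deriv_neg (convex_Icc 0 1) Hcont.continuousOn
    intro x hx
    rw [interior_Icc] at hx
    have h := hin x (by rw [abs_of_pos hx.1]; exact hx.1) (by rw [abs_of_pos hx.1]; exact hx.2)
    nlinarith [hx.1]
  have mono : StrictMonoOn H (Set.Ici 1) := by
    apply strictMonoOn_of_deriv_pos (convex_Ici 1) Hcont.continuousOn
    intro x hx
    rw [interior_Ici] at hx
    have hx0 : (0:ℝ) < x := lt_trans one_pos hx
    have h := hout x (by rw [abs_of_pos hx0]; exact hx)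
    nlinarith
  -- second derivative bound near 1
  set κ := deriv (deriv H) 1 / 2 with hκdef
  have hκpos : 0 < κ := by rw [hκdef]; linarith
  obtain ⟨δ, hδpos, hδball⟩ : ∃ δ > 0, ∀ y, |y - 1| < δ → κ < deriv (deriv H) y := by
    have hopen : IsOpen {y : ℝ | κ < deriv (deriv H) y} := isOpen_lt continuous_const H''cont
    have h1mem : (1:ℝ) ∈ {y : ℝ | κ < deriv (deriv H) y} := by
      simp only [Set.mem_setOf_eq, hκdef]; linarith
    obtain ⟨r, hr, hball⟩ := Metric.isOpen_iff.mp hopen 1 h1mem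
    exact ⟨r, hr, fun y hy => hball (by rwa [Metric.mem_ball, Real.dist_eq])⟩
  set δ₀ : ℝ := min (δ / 2) (1 / 2) with hδ₀def
  have hδ₀pos : 0 < δ₀ := by positivity
  have hδ₀half : δ₀ ≤ 1 / 2 := min_le_right _ _
  have hδ₀δ : δ₀ < δ := lt_of_le_of_lt (min_le_left _ _) (by linarith)
  -- derivative bounds near 1
  have hd_right : ∀ x, 1 < x → x ≤ 1 + δ₀ → κ * (x - 1) ≤ deriv H x := by
    intro x hx1 hx2
    obtain ⟨c, hc, hslope⟩ :=
      exists_deriv_eq_slope (deriv H) hx1 H'cont.continuousOn H'diff.differentiableOn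
    have hcb : κ < deriv (deriv H) c := by
      apply hδball
      rw [abs_of_pos (by linarith [hc.1])]
      linarith [hc.2]
    rw [hd1, sub_zero] at hslope
    have hx1' : (0:ℝ) < x - 1 := by linarith
    have hκlt : κ < deriv H x / (x - 1) := by rw [← hslope]; exact hcb
    calc κ * (x - 1) ≤ (deriv H x / (x - 1)) * (x - 1) :=
          mul_le_mul_of_nonneg_right hκlt.le hx1'.le
      _ = deriv H x := by field_simp
  have hd_left : ∀ x, 1 - δ₀ ≤ x → x < 1 → deriv H x ≤ -(κ * (1 - x)) := by
    intro x hx1 hx2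
    obtain ⟨c, hc, hslope⟩ :=
      exists_deriv_eq_slope (deriv H) hx2 H'cont.continuousOn H'diff.differentiableOn
    have hcb : κ < deriv (deriv H) c := by
      apply hδball
      rw [abs_lt]; constructor <;> [linarith [hc.1]; linarith [hc.2]]
    rw [hd1, zero_sub] at hslope
    have hx1' : (0:ℝ) < 1 - x := by linarith
    have hκlt : κ < -deriv H x / (1 - x) := by rw [← hslope]; exact hcb
    have : κ * (1 - x) ≤ (-deriv H x / (1 - x)) * (1 - x) :=
      mul_le_mul_of_nonneg_right hκlt.le hx1'.le
    have h2' : (-deriv H x / (1 - x)) * (1 - x) = -deriv H x := by field_simp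
    linarith [h2' ▸ this]
  -- quadratic lower bounds
  have quad_right : ∀ t : ℝ, 0 ≤ t → t ≤ δ₀ → κ / 2 * t ^ 2 ≤ H (1 + t) := by
    intro t ht0 htδ
    rcases eq_or_lt_of_le ht0 with h | h
    · simp [← h, h1]
    have hab : (1:ℝ) ≤ 1 + t := by linarith
    have hIcc : ∀ x ∈ Set.Icc (1:ℝ) (1 + t), κ * (x - 1) ≤ deriv H x := by
      intro x hx
      rcases eq_or_lt_of_le hx.1 with h' | h'
      · rw [← h', hd1]; simp
      · exact hd_right x h' (by linarith [hx.2])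
    have key : (∫ x in (1:ℝ)..(1 + t), κ * (x - 1)) ≤ ∫ x in (1:ℝ)..(1 + t), deriv H x := by
      apply intervalIntegral.integral_mono_on hab
        ((Continuous.intervalIntegrable (by fun_prop) _ _))
        (H'cont.intervalIntegrable _ _) hIcc
    have hFTC : (∫ x in (1:ℝ)..(1 + t), deriv H x) = H (1 + t) - H 1 :=
      intervalIntegral.integral_deriv_eq_sub (fun x _ => Hdiff.differentiableAt)
        (H'cont.intervalIntegrable _ _)
    have hcomp : (∫ x in (1:ℝ)..(1 + t), κ * (x - 1)) = κ * (t ^ 2 / 2) := by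
      rw [intervalIntegral.integral_const_mul]
      have h' : (∫ x in (1:ℝ)..(1 + t), (x - 1)) = ∫ x in (0:ℝ)..t, x := by
        have := intervalIntegral.integral_comp_sub_right (a := (1:ℝ)) (b := 1 + t)
          (fun x => x) 1
        simpa using this
      rw [h', integral_id]; ring
    rw [h1, sub_zero] at hFTC
    nlinarith [key, hcomp, hFTC]
  have quad_left : ∀ t : ℝ, 0 ≤ t → t ≤ δ₀ → κ / 2 * t ^ 2 ≤ H (1 - t) := by
    intro t ht0 htδ
    rcases eq_or_lt_of_le ht0 with h | h
    · simp [← h, h1]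
    have hab : (1:ℝ) - t ≤ 1 := by linarith
    have hIcc : ∀ x ∈ Set.Icc (1 - t) (1:ℝ), deriv H x ≤ -(κ * (1 - x)) := by
      intro x hx
      rcases eq_or_lt_of_le hx.2 with h' | h'
      · rw [h', hd1]; simp
      · exact hd_left x (by linarith [hx.1]) h'
    have key : (∫ x in (1 - t)..(1:ℝ), deriv H x) ≤ ∫ x in (1 - t)..(1:ℝ), -(κ * (1 - x)) := by
      apply intervalIntegral.integral_mono_on hab
        (H'cont.intervalIntegrable _ _)
        ((Continuous.intervalIntegrable (by fun_prop) _ _)) hIcc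
    have hFTC : (∫ x in (1 - t)..(1:ℝ), deriv H x) = H 1 - H (1 - t) :=
      intervalIntegral.integral_deriv_eq_sub (fun x _ => Hdiff.differentiableAt)
        (H'cont.intervalIntegrable _ _)
    have hcomp : (∫ x in (1 - t)..(1:ℝ), -(κ * (1 - x))) = -(κ * (t ^ 2 / 2)) := by
      rw [intervalIntegral.integral_neg, intervalIntegral.integral_const_mul]
      have h' : (∫ x in (1 - t)..(1:ℝ), (1 - x)) = ∫ x in (0:ℝ)..t, x := by
        have := intervalIntegral.integral_comp_sub_left (a := 1 - t) (b := (1:ℝ))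
          (fun x => x) 1
        simpa using this
      rw [h', integral_id]; ring
    rw [h1, zero_sub] at hFTC
    nlinarith [key, hcomp, hFTC]
  -- bound on deriv H on [1,2]
  obtain ⟨C, hC⟩ := (isCompact_Icc (a := (1:ℝ)) (b := 2)).exists_bound_of_continuousOn
    H'cont.continuousOn
  have hC0 : 0 ≤ C := le_trans (norm_nonneg _) (hC 1 (by norm_num))
  have hHupper : ∀ x ∈ Set.Icc (1:ℝ) 2, H x ≤ C * (x - 1) := by
    intro x hx
    rcases eq_or_lt_of_le hx.1 with h | h
    · rw [← h, h1]; simp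
    obtain ⟨c, hc, hsl⟩ := exists_deriv_eq_slope H h Hcont.continuousOn Hdiff.differentiableOn
    have hcC : |deriv H c| ≤ C := hC c ⟨by linarith [hc.1], by linarith [hc.2, hx.2]⟩
    have hx1 : (0:ℝ) < x - 1 := by linarith
    rw [h1, sub_zero] at hsl
    have hHx : H x = deriv H c * (x - 1) := by
      field_simp at hsl; linarith [hsl]
    rw [hHx]
    exact mul_le_mul_of_nonneg_right (le_trans (le_abs_self _) hcC) hx1.le
  -- Z is nonnegative, γ is nonnegative
  have hZnonneg : ∀ ε : ℝ, 0 ≤ Z ε := fun ε => by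
    rw [hZ]; exact integral_nonneg fun y => (Real.exp_pos _).le
  have hγnonneg : ∀ ε x, 0 ≤ γ ε x := fun ε x => by
    rw [hγ]; exact div_nonneg (Real.exp_pos _).le (hZnonneg ε)
  -- lower bound on Z in the integrable case
  have hZlower : ∀ ε : ℝ, 0 < ε → ε ≤ 1 →
      Integrable (fun y => Real.exp (-H y / ε ^ 2)) → Real.exp (-C) * ε ^ 2 ≤ Z ε := by
    intro ε hε hε1 hI
    have hε2 : (0:ℝ) < ε ^ 2 := by positivity
    have step1 : ∀ x ∈ Set.Icc (1:ℝ) (1 + ε ^ 2), Real.exp (-C) ≤ Real.exp (-H x / ε ^ 2) := by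
      intro x hx
      apply Real.exp_le_exp.2
      have hε21 : ε ^ 2 ≤ 1 := by nlinarith
      have hx2 : x ∈ Set.Icc (1:ℝ) 2 := ⟨hx.1, by linarith [hx.2]⟩
      have hHx : H x ≤ C * ε ^ 2 := le_trans (hHupper x hx2)
        (mul_le_mul_of_nonneg_left (by linarith [hx.1, hx.2]) hC0)
      rw [neg_div, neg_le_neg_iff, div_le_iff₀ hε2]
      exact hHx
    have hvol : (volume (Set.Icc (1:ℝ) (1 + ε ^ 2))).toReal = ε ^ 2 := by
      rw [Real.volume_Icc, ENNReal.toReal_ofReal (by linarith : (0:ℝ) ≤ 1 + ε ^ 2 - 1)]; ring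
    have step2 := setIntegral_ge_of_const_le_real (measurableSet_Icc)
      (measure_Icc_lt_top).ne step1 hI.integrableOn
    rw [measureReal_def, hvol] at step2
    have step3 : (∫ x in Set.Icc (1:ℝ) (1 + ε ^ 2), Real.exp (-H x / ε ^ 2)) ≤ Z ε := by
      rw [hZ]
      exact setIntegral_le_integral hI (Eventually.of_forall fun y => (Real.exp_pos _).le)
    linarith
  -- lower bound on H on the complement of the wells
  have hHlow : ∀ ε : ℝ, 0 < ε → ε ^ α ≤ δ₀ →
      ∀ x ∈ (Set.Ioo (-1 - ε ^ α) (-1 + ε ^ α) ∪ Set.Ioo (1 - ε ^ α) (1 + ε ^ α))ᶜ,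
      κ / 2 * (ε ^ α) ^ 2 ≤ H x := by
    intro ε hε hεδ x hx
    rw [Set.mem_compl_iff, Set.mem_union, not_or] at hx
    obtain ⟨hxm, hxp⟩ := hx
    have hr0 : 0 < ε ^ α := Real.rpow_pos_of_pos hε α
    have hy : |x| ∉ Set.Ioo (1 - ε ^ α) (1 + ε ^ α) := by
      rcases abs_cases x with ⟨h, _⟩ | ⟨h, _⟩
      · rwa [h]
      · rw [h]
        intro hmem
        exact hxm ⟨by simp only [Set.mem_Ioo] at hmem ⊢; linarith [hmem.2],
          by simp only [Set.mem_Ioo] at hmem ⊢; linarith [hmem.1]⟩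
    have hHabs : H |x| = H x := by
      rcases abs_cases x with ⟨h, _⟩ | ⟨h, _⟩
      · rw [h]
      · rw [h]; exact heven x
    rw [Set.mem_Ioo, not_and_or, not_lt, not_lt] at hy
    rw [← hHabs]
    rcases hy with hy | hy
    · -- |x| ≤ 1 - ε^α
      have h1r : 1 - ε ^ α ∈ Set.Icc (0:ℝ) 1 := ⟨by linarith [le_trans hεδ hδ₀half], by linarith⟩
      have hxI : |x| ∈ Set.Icc (0:ℝ) 1 := ⟨abs_nonneg x, by linarith [h1r.2, hy]⟩
      have := anti.antitoneOn hxI h1r hy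
      calc κ / 2 * (ε ^ α) ^ 2 ≤ H (1 - ε ^ α) := quad_left _ hr0.le hεδ
        _ ≤ H |x| := this
    · -- 1 + ε^α ≤ |x|
      have h1r : (1:ℝ) + ε ^ α ∈ Set.Ici (1:ℝ) := by simp; linarith
      have hxI : |x| ∈ Set.Ici (1:ℝ) := by simp; linarith
      have := mono.monotoneOn h1r hxI hy
      calc κ / 2 * (ε ^ α) ^ 2 ≤ H (1 + ε ^ α) := quad_right _ hr0.le hεδ
        _ ≤ H |x| := this
  -- the squeeze
  apply squeeze_zero' (g := fun ε : ℝ => Real.exp C * (Real.exp (-(κ / 2) * ε ^ (2 * α - 2)) / ε ^ 2))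
  · filter_upwards [self_mem_nhdsWithin] with ε _
    exact Real.sSup_nonneg (by rintro _ ⟨x, hx, rfl⟩; exact hγnonneg ε x)
  · have hmin : 0 < min 1 (δ₀ ^ (1 / α)) :=
      lt_min one_pos (Real.rpow_pos_of_pos hδ₀pos _)
    filter_upwards [Ioc_mem_nhdsGT hmin] with ε hε
    have hε0 : 0 < ε := hε.1
    have hε2 : (0:ℝ) < ε ^ 2 := by positivity
    have hε1 : ε ≤ 1 := le_trans hε.2 (min_le_left _ _)
    have hεδ : ε ^ α ≤ δ₀ := by
      calc ε ^ α ≤ (δ₀ ^ (1 / α)) ^ α :=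
            Real.rpow_le_rpow hε0.le (le_trans hε.2 (min_le_right _ _)) hα0.le
        _ = δ₀ := by
            rw [← Real.rpow_mul hδ₀pos.le, one_div_mul_cancel hα0.ne', Real.rpow_one]
    have hBnonneg : 0 ≤ Real.exp C * (Real.exp (-(κ / 2) * ε ^ (2 * α - 2)) / ε ^ 2) := by
      positivity
    apply Real.sSup_le _ hBnonneg
    rintro _ ⟨x, hx, rfl⟩
    rw [hγ]
    by_cases hI : Integrable (fun y => Real.exp (-H y / ε ^ 2))
    · have hZl := hZlower ε hε0 hε1 hI
      have e2 : (ε ^ α) ^ 2 = ε ^ (2 * α) := by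
        rw [← Real.rpow_natCast (ε ^ α) 2, ← Real.rpow_mul hε0.le]
        norm_num [mul_comm]
      have e1 : ε ^ (2 * α - 2) = ε ^ (2 * α) / ε ^ 2 := by
        rw [Real.rpow_sub hε0, show ((2:ℝ)) = ((2:ℕ):ℝ) by norm_num, Real.rpow_natCast]
      have hnum : Real.exp (-H x / ε ^ 2) ≤ Real.exp (-(κ / 2) * ε ^ (2 * α - 2)) := by
        apply Real.exp_le_exp.2
        have hH := hHlow ε hε0 hεδ x hx
        rw [e2] at hH
        have e3 : -(κ / 2) * ε ^ (2 * α - 2) = (-(κ / 2) * ε ^ (2 * α)) / ε ^ 2 := by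
          rw [e1]; ring
        rw [e3]
        exact (div_le_div_iff_of_pos_right hε2).mpr (by linarith)
      calc Real.exp (-H x / ε ^ 2) / Z ε
          ≤ Real.exp (-(κ / 2) * ε ^ (2 * α - 2)) / (Real.exp (-C) * ε ^ 2) :=
            div_le_div₀ (Real.exp_pos _).le hnum (by positivity) hZl
        _ = Real.exp C * (Real.exp (-(κ / 2) * ε ^ (2 * α - 2)) / ε ^ 2) := by
            rw [Real.exp_neg]; field_simp
    · have hZ0 : Z ε = 0 := by rw [hZ]; exact integral_undef hI
      rw [hZ0, div_zero]
      exact hBnonneg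
  · have := tendsto_aux_gamma (a := κ / 2) (c := 2 * α - 2) (by positivity) (by linarith)
    simpa using Tendsto.const_mul (Real.exp C) this
end

section
/- Let γ : ℝ → (0, ∞) be bounded and integrable and f : [0,T] × ℝ → ℝ measurable with ∫_0^T ∫_ℝ (f² + |∂_x f|²)/γ dx dt < ∞. Then the limits of x ↦ f(·, x) in L²([0,T]) as x → ±∞ exist and vanish; in particular f(t,y) = ∫_{+∞}^{y} ∂_x f(t,x) dx and ∫_ℝ ∂_x f(t,x) dx = 0 for a.e. (t,y). -/
open MeasureTheory Filter Set
open scoped Topology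

/-!
For almost every `t`, AM–GM `2|u| ≤ u²/γ + γ` makes the slices `f t` and `f' t` integrable.
An integrable function on `ℝ` that has a limit at `±∞` has limit `0`, so
`f t x = -∫_x^∞ f' t = ∫_{-∞}^x f' t`. The weighted Cauchy–Schwarz inequality then gives
`f t x ^ 2 ≤ (∫ f' t ^ 2 / γ) * ∫_x^∞ γ`, and after integrating in `t` the right-hand side
is a constant times a tail of the integrable function `γ`, which tends to `0`.
-/

section WeightedCauchySchwarz

variable {α : Type*} [MeasurableSpace α] {μ : Measure α} {u v γ : α → ℝ}

lemma two_mul_mul_le_sq_div_add_sq_mul {w : ℝ} (hw : 0 < w) (s a : ℝ) :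
    2 * s * a ≤ a ^ 2 / w + s ^ 2 * w := by
  have hsq : 0 ≤ (a - s * w) ^ 2 / w := by positivity
  have hexpand : (a - s * w) ^ 2 / w = a ^ 2 / w + s ^ 2 * w - 2 * s * a := by
    field_simp
    ring
  linarith

lemma integrable_sq_div_of_integrable_add_sq_div (hγ : ∀ x, 0 ≤ γ x)
    (hu : AEStronglyMeasurable (fun x => u x ^ 2 / γ x) μ)
    (h : Integrable (fun x => (u x ^ 2 + v x ^ 2) / γ x) μ) :
    Integrable (fun x => u x ^ 2 / γ x) μ :=
  h.mono' hu <| ae_of_all _ fun x => by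
    rw [Real.norm_of_nonneg (div_nonneg (sq_nonneg _) (hγ x))]
    exact div_le_div_of_nonneg_right (le_add_of_nonneg_right (sq_nonneg _)) (hγ x)

lemma MeasureTheory.Integrable.of_sq_div (hγ : ∀ x, 0 < γ x) (hγi : Integrable γ μ)
    (hu : AEStronglyMeasurable u μ) (h : Integrable (fun x => u x ^ 2 / γ x) μ) :
    Integrable u μ :=
  ((h.add hγi).div_const 2).mono' hu <| ae_of_all _ fun x => by
    have := two_mul_mul_le_sq_div_add_sq_mul (hγ x) 1 |u x|
    rw [sq_abs] at this
    simp only [Pi.add_apply, Real.norm_eq_abs]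
    linarith

lemma sq_integral_le_integral_sq_div_mul_integral (hγ : ∀ x, 0 < γ x) (hγi : Integrable γ μ)
    (hu : AEStronglyMeasurable u μ) (h : Integrable (fun x => u x ^ 2 / γ x) μ) :
    (∫ x, u x ∂μ) ^ 2 ≤ (∫ x, u x ^ 2 / γ x ∂μ) * ∫ x, γ x ∂μ := by
  have hui := Integrable.of_sq_div hγ hγi hu h
  -- `s ↦ ∫ (u - s γ)² / γ` is a nonnegative quadratic, so its discriminant is `≤ 0`
  have quadratic_nonneg : ∀ s : ℝ, 0 ≤ (∫ x, γ x ∂μ) * (s * s) + (-2 * ∫ x, u x ∂μ) * s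
      + ∫ x, u x ^ 2 / γ x ∂μ := by
    intro s
    have hint : 0 ≤ ∫ x, (u x ^ 2 / γ x + s ^ 2 * γ x - 2 * s * u x) ∂μ :=
      integral_nonneg fun x => sub_nonneg.2 (two_mul_mul_le_sq_div_add_sq_mul (hγ x) s (u x))
    have hsplit : ∫ x, (u x ^ 2 / γ x + s ^ 2 * γ x - 2 * s * u x) ∂μ
        = ∫ x, u x ^ 2 / γ x ∂μ + s ^ 2 * ∫ x, γ x ∂μ - 2 * s * ∫ x, u x ∂μ := by
      rw [integral_sub (f := fun x => u x ^ 2 / γ x + s ^ 2 * γ x)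
        (h.add (hγi.const_mul _)) (hui.const_mul _), integral_add h (hγi.const_mul _),
        integral_const_mul, integral_const_mul]
    rw [hsplit] at hint
    linarith
  have hdiscrim := discrim_le_zero quadratic_nonneg
  rw [discrim] at hdiscrim
  linarith

lemma sq_setIntegral_le_integral_sq_div_mul_setIntegral (hγ : ∀ x, 0 < γ x)
    (hγi : Integrable γ μ) (hu : AEStronglyMeasurable u μ)
    (h : Integrable (fun x => u x ^ 2 / γ x) μ) (S : Set α) :
    (∫ x in S, u x ∂μ) ^ 2 ≤ (∫ x, u x ^ 2 / γ x ∂μ) * ∫ x in S, γ x ∂μ :=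
  (sq_integral_le_integral_sq_div_mul_integral hγ hγi.integrableOn hu.restrict
    h.integrableOn).trans <| mul_le_mul_of_nonneg_right
      (setIntegral_le_integral h (ae_of_all _ fun x => div_nonneg (sq_nonneg _) (hγ x).le))
      (integral_nonneg fun x => (hγ x).le)

end WeightedCauchySchwarz

section RealLine

variable {E : Type*} [NormedAddCommGroup E]

lemma MeasureTheory.Integrable.eq_zero_of_tendsto_atTop {g : ℝ → E} (hg : Integrable g) {c : E}
    (h : Tendsto g atTop (𝓝 c)) : c = 0 :=
  (hg.integrableAtFilter atTop).eq_zero_of_tendsto (fun s hs => by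
    obtain ⟨b, hb⟩ := mem_atTop_sets.1 hs
    rw [← top_le_iff, ← Real.volume_Ici (a := b)]
    exact measure_mono fun x hx => hb x hx) h

lemma MeasureTheory.Integrable.eq_zero_of_tendsto_atBot {g : ℝ → E} (hg : Integrable g) {c : E}
    (h : Tendsto g atBot (𝓝 c)) : c = 0 :=
  (hg.integrableAtFilter atBot).eq_zero_of_tendsto (fun s hs => by
    obtain ⟨b, hb⟩ := mem_atBot_sets.1 hs
    rw [← top_le_iff, ← Real.volume_Iic (a := b)]
    exact measure_mono fun x hx => hb x hx) h

variable [NormedSpace ℝ E]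

lemma tendsto_setIntegral_Ioi_atTop {g : ℝ → E} (hg : Integrable g) :
    Tendsto (fun x => ∫ s in Ioi x, g s) atTop (𝓝 0) := by
  have hempty : ⋂ x : ℝ, Ioi x = ∅ :=
    iInter_eq_empty_iff.2 fun y => ⟨y, lt_irrefl y⟩
  simpa [hempty] using tendsto_setIntegral_of_antitone (fun _ => measurableSet_Ioi)
    (fun _ _ hxy => Ioi_subset_Ioi hxy) ⟨0, hg.integrableOn⟩

lemma tendsto_setIntegral_Iic_atBot {g : ℝ → E} (hg : Integrable g) :
    Tendsto (fun x => ∫ s in Iic x, g s) atBot (𝓝 0) := by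
  have h := (tendsto_setIntegral_Ioi_atTop hg.comp_neg).comp tendsto_neg_atBot_atTop
  refine h.congr fun x => ?_
  simp

variable {g g' : ℝ → E}

lemma eq_neg_integral_Ioi_of_integrable (hFTC : ∀ a b, g b - g a = ∫ x in a..b, g' x)
    (hg : Integrable g) (hg' : Integrable g') (x : ℝ) : g x = -∫ s in Ioi x, g' s := by
  have hlim : Tendsto g atTop (𝓝 (g x + ∫ s in Ioi x, g' s)) := by
    refine ((intervalIntegral_tendsto_integral_Ioi x hg'.integrableOn tendsto_id).const_add
      (g x)).congr fun b => ?_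
    simp only [id, ← hFTC x b, add_sub_cancel]
  exact eq_neg_of_add_eq_zero_left (hg.eq_zero_of_tendsto_atTop hlim)

lemma eq_integral_Iic_of_integrable (hFTC : ∀ a b, g b - g a = ∫ x in a..b, g' x)
    (hg : Integrable g) (hg' : Integrable g') (x : ℝ) : g x = ∫ s in Iic x, g' s := by
  have hlim : Tendsto g atBot (𝓝 (g x - ∫ s in Iic x, g' s)) := by
    refine (tendsto_const_nhds.sub
      (intervalIntegral_tendsto_integral_Iic x hg'.integrableOn tendsto_id)).congr fun a => ?_
    simp only [id, ← hFTC a x, sub_sub_cancel]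
  exact sub_eq_zero.1 (hg.eq_zero_of_tendsto_atBot hlim)

lemma integral_eq_zero_of_integrable_primitive (hFTC : ∀ a b, g b - g a = ∫ x in a..b, g' x)
    (hg : Integrable g) (hg' : Integrable g') : ∫ x, g' x = 0 := by
  rw [← intervalIntegral.integral_Iic_add_Ioi (b := 0) hg'.integrableOn hg'.integrableOn,
    ← eq_integral_Iic_of_integrable hFTC hg hg' 0,
    eq_neg_integral_Ioi_of_integrable hFTC hg hg' 0, neg_add_cancel]

end RealLine

section SliceBounds

variable {g g' γ : ℝ → ℝ}

lemma sq_le_integral_sq_div_mul_setIntegral_Ioi (hγ : ∀ x, 0 < γ x) (hγi : Integrable γ)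
    (hFTC : ∀ a b, g b - g a = ∫ x in a..b, g' x) (hg : Integrable g)
    (hg'm : AEStronglyMeasurable g') (h : Integrable (fun x => g' x ^ 2 / γ x)) (x : ℝ) :
    g x ^ 2 ≤ (∫ s, g' s ^ 2 / γ s) * ∫ s in Ioi x, γ s := by
  rw [eq_neg_integral_Ioi_of_integrable hFTC hg (.of_sq_div hγ hγi hg'm h) x, neg_sq]
  exact sq_setIntegral_le_integral_sq_div_mul_setIntegral hγ hγi hg'm h _

lemma sq_le_integral_sq_div_mul_setIntegral_Iic (hγ : ∀ x, 0 < γ x) (hγi : Integrable γ)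
    (hFTC : ∀ a b, g b - g a = ∫ x in a..b, g' x) (hg : Integrable g)
    (hg'm : AEStronglyMeasurable g') (h : Integrable (fun x => g' x ^ 2 / γ x)) (x : ℝ) :
    g x ^ 2 ≤ (∫ s, g' s ^ 2 / γ s) * ∫ s in Iic x, γ s := by
  rw [eq_integral_Iic_of_integrable hFTC hg (.of_sq_div hγ hγi hg'm h) x]
  exact sq_setIntegral_le_integral_sq_div_mul_setIntegral hγ hγi hg'm h _

end SliceBounds

lemma tendsto_integral_sq_of_sq_le_mul {β ι : Type*} [MeasurableSpace β] {ν : Measure β}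
    {F : β → ι → ℝ} {K : β → ℝ} {G : ι → ℝ} {l : Filter ι} (hK : Integrable K ν)
    (hG : Tendsto G l (𝓝 0)) (hle : ∀ᵐ t ∂ν, ∀ x, F t x ^ 2 ≤ K t * G x) :
    Tendsto (fun x => ∫ t, F t x ^ 2 ∂ν) l (𝓝 0) := by
  have hbound : Tendsto (fun x => (∫ t, K t ∂ν) * G x) l (𝓝 0) := by
    simpa using hG.const_mul (∫ t, K t ∂ν)
  refine squeeze_zero (fun x => integral_nonneg fun t => sq_nonneg _) (fun x => ?_) hbound
  calc ∫ t, F t x ^ 2 ∂ν ≤ ∫ t, K t * G x ∂ν :=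
        integral_mono_of_nonneg (ae_of_all _ fun t => sq_nonneg _) (hK.mul_const _)
          (hle.mono fun t ht => ht x)
    _ = (∫ t, K t ∂ν) * G x := integral_mul_const _ _

theorem L2_limits_at_infinity_vanish_general
    (T : ℝ)
    (γ : ℝ → ℝ) (hγpos : ∀ x, 0 < γ x) (hγint : Integrable γ)
    (f f' : ℝ → ℝ → ℝ)
    (hfmeas : Measurable (Function.uncurry f))
    (hf'meas : Measurable (Function.uncurry f'))
    (hFTC : ∀ t ∈ Set.Icc (0 : ℝ) T, ∀ a b : ℝ,
      f t b - f t a = ∫ x in a..b, f' t x)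
    (hfin : Integrable (fun p : ℝ × ℝ => ((f p.1 p.2) ^ 2 + (f' p.1 p.2) ^ 2) / γ p.2)
      ((volume : Measure ℝ).restrict (Set.Ioc 0 T) |>.prod (volume : Measure ℝ))) :
    Tendsto (fun x : ℝ => ∫ t in Set.Ioc (0 : ℝ) T, (f t x) ^ 2) atTop (nhds 0) ∧
    Tendsto (fun x : ℝ => ∫ t in Set.Ioc (0 : ℝ) T, (f t x) ^ 2) atBot (nhds 0) ∧
    (∀ᵐ t ∂ (volume : Measure ℝ).restrict (Set.Ioc 0 T),
      (∀ᵐ y ∂ (volume : Measure ℝ), f t y = -∫ x in Set.Ioi y, f' t x) ∧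
      (∫ x : ℝ, f' t x) = 0) := by
  set μ := (volume : Measure ℝ).restrict (Ioc 0 T)
  have hγ2 : AEStronglyMeasurable (fun p : ℝ × ℝ => γ p.2) (μ.prod volume) :=
    hγint.aestronglyMeasurable.comp_snd
  have hf2 : Integrable (fun p : ℝ × ℝ => f p.1 p.2 ^ 2 / γ p.2) (μ.prod volume) :=
    integrable_sq_div_of_integrable_add_sq_div (fun p => (hγpos p.2).le)
      ((hfmeas.pow_const 2).aemeasurable.div hγ2.aemeasurable).aestronglyMeasurable hfin
  have hf'2 : Integrable (fun p : ℝ × ℝ => f' p.1 p.2 ^ 2 / γ p.2) (μ.prod volume) :=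
    integrable_sq_div_of_integrable_add_sq_div (v := fun p => f p.1 p.2) (fun p => (hγpos p.2).le)
      ((hf'meas.pow_const 2).aemeasurable.div hγ2.aemeasurable).aestronglyMeasurable
      (by simpa only [add_comm] using hfin)
  have hf'm : ∀ t, AEStronglyMeasurable (f' t) := fun t =>
    hf'meas.of_uncurry_left.aestronglyMeasurable
  have good_slices : ∀ᵐ t ∂μ, t ∈ Icc 0 T ∧ Integrable (f t) ∧
      Integrable (fun x => f' t x ^ 2 / γ x) := by
    filter_upwards [ae_restrict_mem measurableSet_Ioc, hf2.prod_right_ae, hf'2.prod_right_ae]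
      with t ht hft hf't
    exact ⟨Ioc_subset_Icc_self ht,
      .of_sq_div hγpos hγint hfmeas.of_uncurry_left.aestronglyMeasurable hft, hf't⟩
  have hK : Integrable (fun t => ∫ x, f' t x ^ 2 / γ x) μ := hf'2.integral_prod_left
  refine ⟨tendsto_integral_sq_of_sq_le_mul hK (tendsto_setIntegral_Ioi_atTop hγint) ?_,
    tendsto_integral_sq_of_sq_le_mul hK (tendsto_setIntegral_Iic_atBot hγint) ?_, ?_⟩ <;>
    filter_upwards [good_slices] with t ⟨ht, hft, hf't⟩
  · exact sq_le_integral_sq_div_mul_setIntegral_Ioi hγpos hγint (hFTC t ht) hft (hf'm t) hf't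
  · exact sq_le_integral_sq_div_mul_setIntegral_Iic hγpos hγint (hFTC t ht) hft (hf'm t) hf't
  · have hf'i : Integrable (f' t) := .of_sq_div hγpos hγint (hf'm t) hf't
    exact ⟨ae_of_all _ (eq_neg_integral_Ioi_of_integrable (hFTC t ht) hft hf'i),
      integral_eq_zero_of_integrable_primitive (hFTC t ht) hft hf'i⟩

theorem L2_limits_at_infinity_vanish
    (T : ℝ) (hT : 0 < T)
    (γ : ℝ → ℝ) (hγpos : ∀ x, 0 < γ x) (hγint : Integrable γ)
    (hγbdd : ∃ C : ℝ, ∀ x, γ x ≤ C)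
    (f f' : ℝ → ℝ → ℝ)
    (hfmeas : Measurable (Function.uncurry f))
    (hf'meas : Measurable (Function.uncurry f'))
    (hFTC : ∀ t ∈ Set.Icc (0 : ℝ) T, ∀ a b : ℝ,
      f t b - f t a = ∫ x in a..b, f' t x)
    (hfin : Integrable (fun p : ℝ × ℝ => ((f p.1 p.2) ^ 2 + (f' p.1 p.2) ^ 2) / γ p.2)
      ((volume : Measure ℝ).restrict (Set.Ioc 0 T) |>.prod (volume : Measure ℝ))) :
    Tendsto (fun x : ℝ => ∫ t in Set.Ioc (0 : ℝ) T, (f t x) ^ 2) atTop (nhds 0) ∧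
    Tendsto (fun x : ℝ => ∫ t in Set.Ioc (0 : ℝ) T, (f t x) ^ 2) atBot (nhds 0) ∧
    (∀ᵐ t ∂ (volume : Measure ℝ).restrict (Set.Ioc 0 T),
      (∀ᵐ y ∂ (volume : Measure ℝ), f t y = -∫ x in Set.Ioi y, f' t x) ∧
      (∫ x : ℝ, f' t x) = 0) :=
  L2_limits_at_infinity_vanish_general T γ hγpos hγint f f' hfmeas hf'meas hFTC hfin
end

section
/- Let k > 0 and define on M = (0,2) the metric g_u(v,v) := v² ln(u/(2−u))/(2k(u−1)) (with value v²/k at u = 1) and the energy E(u) := (1/2)(u ln u + (2−u) ln(2−u)), so DE(u)v = (v/2) ln(u/(2−u)). Then a differentiable curve u : [0,∞) → (0,2) satisfies g_{u(t)}(u'(t), v) + DE(u(t)) v = 0 for all v ∈ ℝ and all t > 0 if and only if u'(t) = −k(u(t) − 1) for all t > 0. -/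
open Real Set

/-!
For every `w`, `g w * (-k * (w - 1)) = -(log (w / (2 - w)) / 2)`, so the linear ODE solves the
gradient-flow equation; since `g w > 0` on `(0, 2)`, it is the only velocity that does.
-/

section RelaxationMetric

variable {k : ℝ} {g : ℝ → ℝ} (hg1 : g 1 = 1 / k)
  (hg : ∀ w : ℝ, w ≠ 1 → g w = Real.log (w / (2 - w)) / (2 * k * (w - 1)))
include hg1 hg

theorem metric_mul_relaxation (hk : k ≠ 0) (w : ℝ) :
    g w * (-k * (w - 1)) = -(Real.log (w / (2 - w)) / 2) := by
  rcases eq_or_ne w 1 with rfl | hw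
  · norm_num [hg1]
  · rw [hg w hw]
    field_simp [sub_ne_zero.mpr hw]

/-- The metric is Riemannian: `log (w / (2 - w))` has the sign of `w - 1`. -/
theorem metric_pos (hk : 0 < k) {w : ℝ} (hw : w ∈ Ioo 0 2) : 0 < g w := by
  obtain ⟨hw0, hw2⟩ := hw
  have h2w : 0 < 2 - w := by linarith
  rcases lt_trichotomy w 1 with hlt | rfl | hgt
  · rw [hg w hlt.ne]
    refine div_pos_of_neg_of_neg (Real.log_neg (div_pos hw0 h2w) ?_) ?_
    · rw [div_lt_one h2w]; linarith
    · nlinarith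
  · rw [hg1]; positivity
  · rw [hg w hgt.ne']
    refine div_pos (Real.log_pos ?_) ?_
    · rw [one_lt_div h2w]; linarith
    · nlinarith

end RelaxationMetric

theorem forall_mul_add_mul_eq_zero_iff {a d b : ℝ} :
    (∀ v : ℝ, a * d * v + v / 2 * b = 0) ↔ a * d = -(b / 2) := by
  refine ⟨fun h => ?_, fun h v => ?_⟩
  · linarith [h 1]
  · linear_combination v * h

theorem limit_gradient_flow_iff_linear_ODE_general
    (k : ℝ) (hk : 0 < k)
    (u : ℝ → ℝ)
    (hrange : ∀ t, u t ∈ Set.Ioo (0 : ℝ) 2)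
    (g : ℝ → ℝ)
    (hg1 : g 1 = 1 / k)
    (hg : ∀ w : ℝ, w ≠ 1 → g w = Real.log (w / (2 - w)) / (2 * k * (w - 1))) :
    (∀ t : ℝ, 0 < t → ∀ v : ℝ,
        g (u t) * deriv u t * v + (v / 2) * Real.log (u t / (2 - u t)) = 0) ↔
    (∀ t : ℝ, 0 < t → deriv u t = -k * (u t - 1)) := by
  refine forall_congr' fun t => imp_congr_right fun _ => ?_
  rw [forall_mul_add_mul_eq_zero_iff, ← metric_mul_relaxation hg1 hg hk.ne']
  exact mul_right_inj' (metric_pos hg1 hg hk (hrange t)).ne'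

theorem limit_gradient_flow_iff_linear_ODE
    (k : ℝ) (hk : 0 < k)
    (u : ℝ → ℝ) (hu : Differentiable ℝ u)
    (hrange : ∀ t, u t ∈ Set.Ioo (0 : ℝ) 2)
    (g : ℝ → ℝ)
    (hg1 : g 1 = 1 / k)
    (hg : ∀ w : ℝ, w ≠ 1 → g w = Real.log (w / (2 - w)) / (2 * k * (w - 1))) :
    (∀ t : ℝ, 0 < t → ∀ v : ℝ,
        g (u t) * deriv u t * v + (v / 2) * Real.log (u t / (2 - u t)) = 0) ↔
    (∀ t : ℝ, 0 < t → deriv u t = -k * (u t - 1)) :=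
  limit_gradient_flow_iff_linear_ODE_general k hk u hrange g hg1 hg
end
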